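/- The three POPs (1,2;3,4;5), (1,2;4,3;5), and (1,2;4,5;3) are pairwise Wilf-equivalent. (Explicitly, (1,2;3,4;5) has only the strict relations 2 below 1 and 4 below 3, with 5 isolated; (1,2;4,3;5) has only the strict relations 2 below 1 and 3 below 4, with 5 isolated; (1,2;4,5;3) has only the strict relations 2 below 1 and 5 below 4, with 3 isolated.) -/

import Mathlib

/-- A partially ordered pattern (POP) of size `k`: a strict partial order on the
labels `{1, …, k}`, given by the relation `lt a b` meaning "`a` is strictly below `b`". -/
structure POP (k : ℕ) where
  lt : ℕ → ℕ → Prop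
  supp : ∀ a b, lt a b → 1 ≤ a ∧ a ≤ k ∧ 1 ≤ b ∧ b ≤ k
  irrefl : ∀ a, ¬ lt a a
  trans : ∀ a b c, lt a b → lt b c → lt a c

/-- An occurrence of the POP `p` in a permutation `π` of `{1, …, n}`:
indices `i₁ < ⋯ < i_k` with `π (i_a) < π (i_b)` whenever label `a` is strictly
below label `b` in `p` (everything 0-indexed internally). -/
def POP.Occurs {k : ℕ} (p : POP k) {n : ℕ} (π : Equiv.Perm (Fin n)) : Prop :=
  ∃ f : Fin k → Fin n, StrictMono f ∧
    ∀ a b : Fin k, p.lt ((a : ℕ) + 1) ((b : ℕ) + 1) → π (f a) < π (f b)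

/-- The number of permutations of `{1, …, n}` avoiding the POP `p`. -/
noncomputable def POP.avoiders {k : ℕ} (p : POP k) (n : ℕ) : ℕ :=
  Nat.card {π : Equiv.Perm (Fin n) // ¬ p.Occurs π}

/-- Wilf-equivalence of POPs: the same number of avoiding permutations for every `n ≥ 1`. -/
def WilfEquiv {k l : ℕ} (p : POP k) (q : POP l) : Prop :=
  ∀ n : ℕ, 1 ≤ n → p.avoiders n = q.avoiders n

/-- `σ` is a transversal of the Ferrers board with row lengths `lam`
(rows and columns 0-indexed): the 1 of column `j` lies in cell (row `σ j`, column `j`),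
which must lie inside the board. -/
def IsTransversal {n : ℕ} (lam : Fin n → ℕ) (σ : Equiv.Perm (Fin n)) : Prop :=
  ∀ j : Fin n, (j : ℕ) < lam (σ j)

/-- The transversal `σ` of the Ferrers board `lam` contains the POP `p`:
there are rows `r₁ < ⋯ < r_k`, columns `c₁ < ⋯ < c_k`, all cells `(r i, c j)` inside
the board, and a bijection `τ` with `σ (c j) = r (τ j)` and `τ a < τ b` whenever
`a` is strictly below `b` in `p`. -/
def POP.TContains {k : ℕ} (p : POP k) {n : ℕ} (lam : Fin n → ℕ)
    (σ : Equiv.Perm (Fin n)) : Prop :=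
  ∃ (r c : Fin k → Fin n) (τ : Equiv.Perm (Fin k)),
    StrictMono r ∧ StrictMono c ∧
    (∀ i j, (c j : ℕ) < lam (r i)) ∧
    (∀ j, σ (c j) = r (τ j)) ∧
    ∀ a b : Fin k, p.lt ((a : ℕ) + 1) ((b : ℕ) + 1) → τ a < τ b

/-- The number of transversals of the Ferrers board `lam` avoiding the POP `p`. -/
noncomputable def POP.shapeAvoiders {k : ℕ} (p : POP k) {n : ℕ} (lam : Fin n → ℕ) : ℕ :=
  Nat.card {σ : Equiv.Perm (Fin n) // IsTransversal lam σ ∧ ¬ p.TContains lam σ}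

/-- Shape-Wilf-equivalence of POPs: the same number of avoiding transversals for
every Ferrers board (a weakly decreasing positive row-length function). -/
def ShapeWilfEquiv {k l : ℕ} (p : POP k) (q : POP l) : Prop :=
  ∀ (n : ℕ) (lam : Fin n → ℕ), Antitone lam → (∀ i, 0 < lam i) →
    p.shapeAvoiders lam = q.shapeAvoiders lam

/-- The ordinal sum `p ⊕ q` of POPs: labels `1, …, k` ordered as in `p`, labels
`k+1, …, k+l` ordered as in `q` (shifted), and every label `≤ k` strictly below
every label `> k`. -/
def OrdSum {k l : ℕ} (p : POP k) (q : POP l) : POP (k + l) where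
  lt a b := (a ≤ k ∧ b ≤ k ∧ p.lt a b) ∨ (k < a ∧ k < b ∧ q.lt (a - k) (b - k)) ∨
    (1 ≤ a ∧ a ≤ k ∧ k < b ∧ b ≤ k + l)
  supp a b h := by
    rcases h with ⟨_, _, h⟩ | ⟨ha, hb, h⟩ | h
    · have := p.supp _ _ h; omega
    · have := q.supp _ _ h; omega
    · omega
  irrefl a h := by
    rcases h with ⟨_, _, h⟩ | ⟨_, _, h⟩ | h
    · exact p.irrefl _ h
    · exact q.irrefl _ h
    · omega
  trans a b c hab hbc := by
    rcases hab with ⟨ha, hb, h1⟩ | ⟨ha, hb, h1⟩ | h1 <;>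
      rcases hbc with ⟨hb', hc, h2⟩ | ⟨hb', hc, h2⟩ | h2
    · exact Or.inl ⟨ha, hc, p.trans _ _ _ h1 h2⟩
    · omega
    · have := p.supp _ _ h1; right; right; omega
    · omega
    · exact Or.inr (Or.inl ⟨ha, hc, q.trans _ _ _ h1 h2⟩)
    · omega
    · omega
    · have := q.supp _ _ h2; right; right; omega
    · omega

/-- The disjoint sum `p + q` of POPs: labels `1, …, k` ordered as in `p`, labels
`k+1, …, k+l` ordered as in `q` (shifted), and no relations between the two parts. -/
def DisjSum {k l : ℕ} (p : POP k) (q : POP l) : POP (k + l) where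
  lt a b := (a ≤ k ∧ b ≤ k ∧ p.lt a b) ∨ (k < a ∧ k < b ∧ q.lt (a - k) (b - k))
  supp a b h := by
    rcases h with ⟨_, _, h⟩ | ⟨ha, hb, h⟩
    · have := p.supp _ _ h; omega
    · have := q.supp _ _ h; omega
  irrefl a h := by
    rcases h with ⟨_, _, h⟩ | ⟨_, _, h⟩
    · exact p.irrefl _ h
    · exact q.irrefl _ h
  trans a b c hab hbc := by
    rcases hab with ⟨ha, hb, h1⟩ | ⟨ha, hb, h1⟩ <;>
      rcases hbc with ⟨hb', hc, h2⟩ | ⟨hb', hc, h2⟩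
    · exact Or.inl ⟨ha, hc, p.trans _ _ _ h1 h2⟩
    · omega
    · omega
    · exact Or.inr ⟨ha, hc, q.trans _ _ _ h1 h2⟩

/-- The label `i` is isolated in the POP `p`: it is a label of `p` incomparable
to every other label. -/
def POP.Isolated {k : ℕ} (p : POP k) (i : ℕ) : Prop :=
  1 ≤ i ∧ i ≤ k ∧ ∀ j, ¬ p.lt i j ∧ ¬ p.lt j i

/-- The restriction of the POP `p` to the initial labels `{1, …, m}`. -/
def POP.restrictInit {k : ℕ} (p : POP k) (m : ℕ) : POP m where
  lt a b := a ≤ m ∧ b ≤ m ∧ p.lt a b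
  supp a b h := by have := p.supp _ _ h.2.2; omega
  irrefl a h := p.irrefl a h.2.2
  trans a b c h1 h2 := ⟨h1.1, h2.2.1, p.trans _ _ _ h1.2.2 h2.2.2⟩

/-- The reverse `r(p)` of a POP of size `k`: `a` is strictly below `b` iff
`k+1-a` is strictly below `k+1-b` in `p`. -/
def POP.rev {k : ℕ} (p : POP k) : POP k where
  lt a b := a ≤ k ∧ b ≤ k ∧ p.lt (k + 1 - a) (k + 1 - b)
  supp a b h := by
    obtain ⟨h1, h2, h3⟩ := h
    have := p.supp _ _ h3; omega
  irrefl a h := p.irrefl _ h.2.2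
  trans a b c h1 h2 := ⟨h1.1, h2.2.1, p.trans _ _ _ h1.2.2 h2.2.2⟩

/-- The POP `(1,2;3,4;5)`: only relations `2 < 1` and `4 < 3`, label `5` isolated. -/
def pop12c34i5 : POP 5 where
  lt a b := (a = 2 ∧ b = 1) ∨
    (a = 4 ∧ b = 3)
  supp a b h := by omega
  irrefl a h := by omega
  trans a b c h1 h2 := by omega

/-- The POP `(1,2;4,3;5)`: only relations `2 < 1` and `3 < 4`, label `5` isolated. -/
def pop12c43i5 : POP 5 where
  lt a b := (a = 2 ∧ b = 1) ∨
    (a = 3 ∧ b = 4)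
  supp a b h := by omega
  irrefl a h := by omega
  trans a b c h1 h2 := by omega

/-- The POP `(1,2;4,5;3)`: only relations `2 < 1` and `5 < 4`, label `3` isolated. -/
def pop12c45i3 : POP 5 where
  lt a b := (a = 2 ∧ b = 1) ∨
    (a = 5 ∧ b = 4)
  supp a b h := by omega
  irrefl a h := by omega
  trans a b c h1 h2 := by omega

open Set Equiv Function

/-!
Write `v` for the one-line notation of `π` and `d` for the length of its initial increasing
run, capped at `n - 2`. All three patterns begin with an inversion `i₀ < i₁`, and the earliest
possible `i₁` is `d`. Hence avoiding `(1,2;3,4;5)`, `(1,2;4,3;5)` or `(1,2;4,5;3)` means that `v`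
increases on `[d+1, n-2]`, decreases on `[d+1, n-2]`, or increases on `[d+2, n-1]`,
respectively. Reversing the segment `[d+1, n-2]`, resp. `[d+1, n-1]`, of `v` leaves the first
`d+1` entries in place, so it preserves `d`, is an involution on permutations, and exchanges
these conditions.
-/

theorem Function.involutive_mul_right_of_stable {M ι : Type*} [Monoid M] {d : M → ι} {g : ι → M}
    (hg : ∀ i, g i * g i = 1) (hd : ∀ x, d (x * g (d x)) = d x) :
    Involutive fun x => x * g (d x) := by
  intro x
  simp only [hd, mul_assoc, hg, mul_one]

theorem WilfEquiv.symm {k l : ℕ} {p : POP k} {q : POP l} (h : WilfEquiv p q) : WilfEquiv q p :=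
  fun n hn => (h n hn).symm

theorem WilfEquiv.trans {k l m : ℕ} {p : POP k} {q : POP l} {r : POP m} (hpq : WilfEquiv p q)
    (hqr : WilfEquiv q r) : WilfEquiv p r :=
  fun n hn => (hpq n hn).trans (hqr n hn)

theorem POP.avoiders_eq_of_involutive {k l n : ℕ} {p : POP k} {q : POP l}
    {φ : Perm (Fin n) → Perm (Fin n)} (hφ : Involutive φ)
    (h : ∀ π, ¬p.Occurs π ↔ ¬q.Occurs (φ π)) : p.avoiders n = q.avoiders n :=
  Nat.card_congr ((hφ.toPerm φ).subtypeEquiv h)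

theorem not_exists_inversion_iff {β : Type*} [LinearOrder β] {v : ℕ → β} {s : Set ℕ}
    (hv : InjOn v s) : (¬∃ i ∈ s, ∃ j ∈ s, i < j ∧ v j < v i) ↔ StrictMonoOn v s := by
  refine ⟨fun h => MonotoneOn.strictMonoOn_of_injOn (fun i hi j hj hij => ?_) hv, ?_⟩
  · rcases hij.lt_or_eq with hij | rfl
    · exact not_lt.mp fun hji => h ⟨i, hi, j, hj, hij, hji⟩
    · exact le_rfl
  · rintro hmono ⟨i, hi, j, hj, hij, hji⟩
    exact (hmono hi hj hij).asymm hji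

theorem not_exists_ascent_iff {β : Type*} [LinearOrder β] {v : ℕ → β} {s : Set ℕ}
    (hv : InjOn v s) : (¬∃ i ∈ s, ∃ j ∈ s, i < j ∧ v i < v j) ↔ StrictAntiOn v s := by
  simpa [← strictMonoOn_toDual_comp_iff] using
    not_exists_inversion_iff (v := OrderDual.toDual ∘ v) (OrderDual.toDual.injective.comp_injOn hv)

theorem strictMonoOn_iff_strictAntiOn_of_reflect {β : Type*} [Preorder β] {v w : ℕ → β}
    {s t : Set ℕ} {c : ℕ} (hw : ∀ j ∈ s, w j = v (c - j)) (hst : MapsTo (c - ·) s t)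
    (hts : MapsTo (c - ·) t s) (hs : s ⊆ Iic c) (ht : t ⊆ Iic c) :
    StrictMonoOn v t ↔ StrictAntiOn w s := by
  have hanti : ∀ {u : Set ℕ}, u ⊆ Iic c → StrictAntiOn (c - ·) u := fun hu i _ j hj hij => by
    have hjc : j ≤ c := hu hj
    show c - j < c - i
    omega
  refine ⟨fun hv => (hv.comp_strictAntiOn (hanti hs) hst).congr fun j hj => (hw j hj).symm,
    fun hw' => (hw'.comp (hanti ht) hts).congr fun j hj => ?_⟩
  have hjc : j ≤ c := ht hj
  simp only [comp_apply, hw _ (hts hj), Nat.sub_sub_self hjc]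

theorem strictAntiOn_iff_strictMonoOn_of_reflect {β : Type*} [Preorder β] {v w : ℕ → β}
    {s t : Set ℕ} {c : ℕ} (hw : ∀ j ∈ s, w j = v (c - j)) (hst : MapsTo (c - ·) s t)
    (hts : MapsTo (c - ·) t s) (hs : s ⊆ Iic c) (ht : t ⊆ Iic c) :
    StrictAntiOn v t ↔ StrictMonoOn w s := by
  simpa [strictMonoOn_toDual_comp_iff, strictAntiOn_toDual_comp_iff] using
    strictMonoOn_iff_strictAntiOn_of_reflect (v := OrderDual.toDual ∘ v)
      (w := OrderDual.toDual ∘ w) (fun j hj => congrArg OrderDual.toDual (hw j hj)) hst hts hs ht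

theorem antitone_exists_pair_Icc {r : ℕ → ℕ → Prop} {c b : ℕ} :
    Antitone fun t => ∃ i ∈ Icc (t + c) b, ∃ j ∈ Icc (t + c) b, i < j ∧ r i j :=
  fun s t hst ⟨i, hi, j, hj, h⟩ =>
    have hsub : Icc (t + c) b ⊆ Icc (s + c) b := Icc_subset_Icc (by omega) le_rfl
    ⟨i, hsub hi, j, hsub hj, h⟩

section IncreasingPrefix

variable {v w : ℕ → ℕ} {m : ℕ}

open scoped Classical in
noncomputable def increasingPrefixLength (v : ℕ → ℕ) (m : ℕ) : ℕ :=
  Nat.findGreatest (fun s => StrictMonoOn v (Iio s)) m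

theorem increasingPrefixLength_le : increasingPrefixLength v m ≤ m := by
  classical
  exact Nat.findGreatest_le m

theorem strictMonoOn_Iio_increasingPrefixLength :
    StrictMonoOn v (Iio (increasingPrefixLength v m)) := by
  classical
  refine Nat.findGreatest_spec (P := fun s => StrictMonoOn v (Iio s)) (Nat.zero_le m) ?_
  simp [StrictMonoOn]

theorem not_strictMonoOn_Iio_succ_increasingPrefixLength (h : increasingPrefixLength v m < m) :
    ¬StrictMonoOn v (Iio (increasingPrefixLength v m + 1)) := by
  classical
  exact Nat.findGreatest_is_greatest (Nat.lt_succ_self _) h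

theorem exists_lt_increasingPrefixLength_of_lt (hv : InjOn v (Iio m))
    (h : increasingPrefixLength v m < m) :
    ∃ i < increasingPrefixLength v m, v (increasingPrefixLength v m) < v i := by
  set d := increasingPrefixLength v m
  have hinc : StrictMonoOn v (Iio d) := strictMonoOn_Iio_increasingPrefixLength
  by_contra! hle
  refine not_strictMonoOn_Iio_succ_increasingPrefixLength h fun i hi j hj hij => ?_
  simp only [mem_Iio] at hi hj
  rcases (Nat.lt_succ_iff.mp hj).lt_or_eq with hjd | rfl
  · exact hinc (mem_Iio.mpr (hij.trans hjd)) (mem_Iio.mpr hjd) hij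
  · exact (hle i hij).lt_of_ne fun he => hij.ne (hv (mem_Iio.mpr (by omega)) (mem_Iio.mpr (by omega)) he)

theorem increasingPrefixLength_congr (h : ∀ j ≤ increasingPrefixLength v m, w j = v j) :
    increasingPrefixLength w m = increasingPrefixLength v m := by
  classical
  set d := increasingPrefixLength v m
  have hiff : ∀ s ≤ d + 1, StrictMonoOn w (Iio s) ↔ StrictMonoOn v (Iio s) := fun s hs =>
    ⟨fun hw => hw.congr fun j hj => h j (by simp only [mem_Iio] at hj; omega),
     fun hv => hv.congr fun j hj => (h j (by simp only [mem_Iio] at hj; omega)).symm⟩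
  refine Nat.findGreatest_eq_iff.mpr
    ⟨increasingPrefixLength_le, fun _ => ?_, fun s hds hsm hw => ?_⟩
  · exact (hiff d (by omega)).mpr strictMonoOn_Iio_increasingPrefixLength
  · refine not_strictMonoOn_Iio_succ_increasingPrefixLength (by omega) ((hiff (d + 1) le_rfl).mp ?_)
    exact hw.mono (Iio_subset_Iio hds)

theorem exists_inversion_and_iff (hv : InjOn v (Iio m)) {R : ℕ → Prop} (hR : Antitone R)
    (hRm : ∀ t, R t → t < m) :
    (∃ i₀ i₁, i₀ < i₁ ∧ v i₁ < v i₀ ∧ R i₁) ↔ R (increasingPrefixLength v m) := by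
  constructor
  · rintro ⟨i₀, i₁, h01, hv10, hR1⟩
    refine hR (not_lt.mp fun h1d => ?_) hR1
    exact (strictMonoOn_Iio_increasingPrefixLength (mem_Iio.mpr (h01.trans h1d)) h1d h01).asymm hv10
  · intro hRd
    obtain ⟨i, hid, hvi⟩ := exists_lt_increasingPrefixLength_of_lt hv (hRm _ hRd)
    exact ⟨i, _, hid, hvi, hRd⟩

end IncreasingPrefix

section OneLine

variable {n : ℕ}

def oneLine (π : Perm (Fin n)) (i : ℕ) : ℕ := if h : i < n then π ⟨i, h⟩ else 0

@[simp]
theorem oneLine_val (π : Perm (Fin n)) (i : Fin n) : oneLine π i = π i := by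
  simp [oneLine]

theorem oneLine_mul (π σ : Perm (Fin n)) (i : Fin n) : oneLine (π * σ) i = oneLine π (σ i) := by
  simp

theorem injOn_oneLine (π : Perm (Fin n)) : InjOn (oneLine π) (Iio n) := fun i hi j hj h => by
  simp only [mem_Iio] at hi hj
  simpa [oneLine, hi, hj, Fin.val_inj] using h

theorem POP.occurs_iff_exists_nat {k : ℕ} (p : POP k) (π : Perm (Fin n)) :
    p.Occurs π ↔ ∃ f : Fin k → ℕ, StrictMono f ∧ (∀ a, f a < n) ∧
      ∀ a b : Fin k, p.lt (a + 1) (b + 1) → oneLine π (f a) < oneLine π (f b) := by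
  constructor
  · rintro ⟨f, hf, hp⟩
    exact ⟨fun a => f a, hf, fun a => (f a).isLt, fun a b hab => by simpa using hp a b hab⟩
  · rintro ⟨f, hf, hn, hp⟩
    refine ⟨fun a => ⟨f a, hn a⟩, fun a b hab => hf hab, fun a b hab => ?_⟩
    simpa [oneLine, hn] using hp a b hab

end OneLine

section Patterns

variable {n : ℕ} (π : Perm (Fin n))

theorem POP.occurs_iff_of_lt_iff {p : POP 5} {x y : Fin 5}
    (hp : ∀ a b : Fin 5, p.lt (a + 1) (b + 1) ↔ a = 1 ∧ b = 0 ∨ a = x ∧ b = y) :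
    p.Occurs π ↔ ∃ i₀ i₁ i₂ i₃ i₄, i₀ < i₁ ∧ i₁ < i₂ ∧ i₂ < i₃ ∧ i₃ < i₄ ∧ i₄ < n ∧
      oneLine π i₁ < oneLine π i₀ ∧
      oneLine π (![i₀, i₁, i₂, i₃, i₄] x) < oneLine π (![i₀, i₁, i₂, i₃, i₄] y) := by
  have hrel : ∀ f : Fin 5 → ℕ, (∀ a b : Fin 5, p.lt (a + 1) (b + 1) →
      oneLine π (f a) < oneLine π (f b)) ↔
      oneLine π (f 1) < oneLine π (f 0) ∧ oneLine π (f x) < oneLine π (f y) := fun f => by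
    simp [hp, or_imp, forall_and]
  simp only [POP.occurs_iff_exists_nat, hrel]
  constructor
  · rintro ⟨f, hf, hn, h10, hxy⟩
    have hf_eq : ![f 0, f 1, f 2, f 3, f 4] = f := by ext a; fin_cases a <;> rfl
    exact ⟨f 0, f 1, f 2, f 3, f 4, hf (by decide), hf (by decide), hf (by decide),
      hf (by decide), hn 4, h10, by rwa [hf_eq]⟩
  · rintro ⟨i₀, i₁, i₂, i₃, i₄, h01, h12, h23, h34, h4, h10, hxy⟩
    have hmono : StrictMono ![i₀, i₁, i₂, i₃, i₄] :=
      Fin.strictMono_iff_lt_succ.mpr fun a => by fin_cases a <;> assumption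
    exact ⟨_, hmono, fun a => (hmono.monotone (Fin.le_last a)).trans_lt h4, h10, hxy⟩

theorem occurs_pop12c34i5_iff : pop12c34i5.Occurs π ↔ ∃ i₀ i₁, i₀ < i₁ ∧
    oneLine π i₁ < oneLine π i₀ ∧
    ∃ i ∈ Icc (i₁ + 1) (n - 2), ∃ j ∈ Icc (i₁ + 1) (n - 2), i < j ∧ oneLine π j < oneLine π i := by
  rw [POP.occurs_iff_of_lt_iff π (x := 3) (y := 2)
    fun a b => by simp only [pop12c34i5, Fin.ext_iff]; omega]
  constructor
  · rintro ⟨i₀, i₁, i₂, i₃, i₄, h01, h12, h23, h34, h4, h10, h32⟩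
    exact ⟨i₀, i₁, h01, h10, i₂, ⟨h12, by omega⟩, i₃, ⟨by omega, by omega⟩, h23, h32⟩
  · rintro ⟨i₀, i₁, h01, h10, i₂, ⟨h12, -⟩, i₃, ⟨-, h3⟩, h23, h32⟩
    exact ⟨i₀, i₁, i₂, i₃, n - 1, h01, h12, h23, by omega, by omega, h10, h32⟩

theorem occurs_pop12c43i5_iff : pop12c43i5.Occurs π ↔ ∃ i₀ i₁, i₀ < i₁ ∧
    oneLine π i₁ < oneLine π i₀ ∧
    ∃ i ∈ Icc (i₁ + 1) (n - 2), ∃ j ∈ Icc (i₁ + 1) (n - 2), i < j ∧ oneLine π i < oneLine π j := by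
  rw [POP.occurs_iff_of_lt_iff π (x := 2) (y := 3)
    fun a b => by simp only [pop12c43i5, Fin.ext_iff]; omega]
  constructor
  · rintro ⟨i₀, i₁, i₂, i₃, i₄, h01, h12, h23, h34, h4, h10, h23'⟩
    exact ⟨i₀, i₁, h01, h10, i₂, ⟨h12, by omega⟩, i₃, ⟨by omega, by omega⟩, h23, h23'⟩
  · rintro ⟨i₀, i₁, h01, h10, i₂, ⟨h12, -⟩, i₃, ⟨-, h3⟩, h23, h23'⟩
    exact ⟨i₀, i₁, i₂, i₃, n - 1, h01, h12, h23, by omega, by omega, h10, h23'⟩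

theorem occurs_pop12c45i3_iff : pop12c45i3.Occurs π ↔ ∃ i₀ i₁, i₀ < i₁ ∧
    oneLine π i₁ < oneLine π i₀ ∧
    ∃ i ∈ Icc (i₁ + 2) (n - 1), ∃ j ∈ Icc (i₁ + 2) (n - 1), i < j ∧ oneLine π j < oneLine π i := by
  rw [POP.occurs_iff_of_lt_iff π (x := 4) (y := 3)
    fun a b => by simp only [pop12c45i3, Fin.ext_iff]; omega]
  constructor
  · rintro ⟨i₀, i₁, i₂, i₃, i₄, h01, h12, h23, h34, h4, h10, h43⟩
    exact ⟨i₀, i₁, h01, h10, i₃, ⟨by omega, by omega⟩, i₄, ⟨by omega, by omega⟩, h34, h43⟩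
  · rintro ⟨i₀, i₁, h01, h10, i₃, ⟨h13, -⟩, i₄, ⟨-, h4⟩, h34, h43⟩
    exact ⟨i₀, i₁, i₁ + 1, i₃, i₄, h01, by omega, by omega, h34, by omega, h10, h43⟩

theorem not_occurs_pop12c34i5_iff : ¬pop12c34i5.Occurs π ↔
    StrictMonoOn (oneLine π) (Icc (increasingPrefixLength (oneLine π) (n - 2) + 1) (n - 2)) := by
  have hinj := injOn_oneLine π
  rw [occurs_pop12c34i5_iff, exists_inversion_and_iff (hinj.mono (Iio_subset_Iio (Nat.sub_le n 2)))
    antitone_exists_pair_Icc fun t ⟨i, hi, j, hj, _⟩ => by simp only [mem_Icc] at hi hj; omega,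
    not_exists_inversion_iff (hinj.mono fun j hj => by simp only [mem_Icc, mem_Iio] at hj ⊢; omega)]

theorem not_occurs_pop12c43i5_iff : ¬pop12c43i5.Occurs π ↔
    StrictAntiOn (oneLine π) (Icc (increasingPrefixLength (oneLine π) (n - 2) + 1) (n - 2)) := by
  have hinj := injOn_oneLine π
  rw [occurs_pop12c43i5_iff, exists_inversion_and_iff (hinj.mono (Iio_subset_Iio (Nat.sub_le n 2)))
    antitone_exists_pair_Icc fun t ⟨i, hi, j, hj, _⟩ => by simp only [mem_Icc] at hi hj; omega,
    not_exists_ascent_iff (hinj.mono fun j hj => by simp only [mem_Icc, mem_Iio] at hj ⊢; omega)]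

theorem not_occurs_pop12c45i3_iff : ¬pop12c45i3.Occurs π ↔
    StrictMonoOn (oneLine π) (Icc (increasingPrefixLength (oneLine π) (n - 2) + 2) (n - 1)) := by
  have hinj := injOn_oneLine π
  rw [occurs_pop12c45i3_iff, exists_inversion_and_iff (hinj.mono (Iio_subset_Iio (Nat.sub_le n 2)))
    antitone_exists_pair_Icc fun t ⟨i, hi, j, hj, _⟩ => by simp only [mem_Icc] at hi hj; omega,
    not_exists_inversion_iff (hinj.mono fun j hj => by simp only [mem_Icc, mem_Iio] at hj ⊢; omega)]

end Patterns

section SegmentReversal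

variable {n : ℕ}

def segmentReversal (n a b : ℕ) : Perm (Fin n) :=
  Involutive.toPerm
    (fun j => if h : a ≤ j ∧ (j : ℕ) ≤ b ∧ b < n then ⟨a + b - j, by omega⟩ else j)
    fun j => by
      by_cases h : a ≤ (j : ℕ) ∧ (j : ℕ) ≤ b ∧ b < n
      · have h' : a ≤ a + b - j ∧ a + b - j ≤ b ∧ b < n := by omega
        simp only [h, h', and_self, dite_true, Fin.ext_iff]
        omega
      · simp only [h, dite_false]

theorem segmentReversal_apply_val (a b : ℕ) (j : Fin n) :
    (segmentReversal n a b j : ℕ) = if a ≤ j ∧ (j : ℕ) ≤ b ∧ b < n then a + b - j else j := by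
  simp only [segmentReversal, Involutive.toPerm, Equiv.coe_fn_mk]
  split_ifs <;> rfl

theorem segmentReversal_mul_self (a b : ℕ) :
    segmentReversal n a b * segmentReversal n a b = 1 := by
  ext j
  simp only [Perm.mul_apply, segmentReversal_apply_val, Perm.one_apply]
  split_ifs <;> omega

theorem oneLine_mul_segmentReversal_of_mem (π : Perm (Fin n)) {a b j : ℕ} (hj : j ∈ Icc a b)
    (hb : b < n) : oneLine (π * segmentReversal n a b) j = oneLine π (a + b - j) := by
  simp only [mem_Icc] at hj
  have hjn : j < n := by omega
  have hrev : segmentReversal n a b ⟨j, hjn⟩ = ⟨a + b - j, by omega⟩ := by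
    ext; simp [segmentReversal_apply_val, hj, hb]
  rw [← Fin.val_mk hjn, oneLine_mul, hrev, oneLine_val]

theorem oneLine_mul_segmentReversal_of_lt (π : Perm (Fin n)) {a b j : ℕ} (hj : j < a) :
    oneLine (π * segmentReversal n a b) j = oneLine π j := by
  by_cases hjn : j < n
  · have hrev : segmentReversal n a b ⟨j, hjn⟩ = ⟨j, hjn⟩ := by
      ext; simp [segmentReversal_apply_val, hj.not_ge]
    rw [← Fin.val_mk hjn, oneLine_mul, hrev]
  · simp [oneLine, hjn]

theorem increasingPrefixLength_oneLine_mul_segmentReversal (π : Perm (Fin n)) (m b : ℕ) :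
    increasingPrefixLength
        (oneLine (π * segmentReversal n (increasingPrefixLength (oneLine π) m + 1) b)) m =
      increasingPrefixLength (oneLine π) m :=
  increasingPrefixLength_congr fun _ hj => oneLine_mul_segmentReversal_of_lt π (by omega)

theorem involutive_mul_segmentReversal (m b : ℕ) :
    Involutive fun π : Perm (Fin n) =>
      π * segmentReversal n (increasingPrefixLength (oneLine π) m + 1) b :=
  involutive_mul_right_of_stable (g := fun d => segmentReversal n (d + 1) b)
    (fun _ => segmentReversal_mul_self _ _)
    fun π => increasingPrefixLength_oneLine_mul_segmentReversal π m b

end SegmentReversal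

theorem avoiders_pop12c34i5_eq_avoiders_pop12c43i5 (n : ℕ) :
    pop12c34i5.avoiders n = pop12c43i5.avoiders n := by
  refine POP.avoiders_eq_of_involutive (involutive_mul_segmentReversal (n - 2) (n - 2)) fun π => ?_
  rw [not_occurs_pop12c34i5_iff, not_occurs_pop12c43i5_iff,
    increasingPrefixLength_oneLine_mul_segmentReversal]
  set d := increasingPrefixLength (oneLine π) (n - 2)
  have hmaps : MapsTo (d + 1 + (n - 2) - ·) (Icc (d + 1) (n - 2)) (Icc (d + 1) (n - 2)) :=
    fun j hj => by simp only [mem_Icc] at hj ⊢; omega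
  have hle : Icc (d + 1) (n - 2) ⊆ Iic (d + 1 + (n - 2)) :=
    fun j hj => by simp only [mem_Icc, mem_Iic] at hj ⊢; omega
  exact strictMonoOn_iff_strictAntiOn_of_reflect
    (fun j hj => oneLine_mul_segmentReversal_of_mem π hj (by simp only [mem_Icc] at hj; omega))
    hmaps hmaps hle hle

theorem avoiders_pop12c43i5_eq_avoiders_pop12c45i3 (n : ℕ) :
    pop12c43i5.avoiders n = pop12c45i3.avoiders n := by
  refine POP.avoiders_eq_of_involutive (involutive_mul_segmentReversal (n - 2) (n - 1)) fun π => ?_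
  rw [not_occurs_pop12c43i5_iff, not_occurs_pop12c45i3_iff,
    increasingPrefixLength_oneLine_mul_segmentReversal]
  set d := increasingPrefixLength (oneLine π) (n - 2)
  exact strictAntiOn_iff_strictMonoOn_of_reflect (c := d + 1 + (n - 1))
    (fun j hj => by
      simp only [mem_Icc] at hj
      exact oneLine_mul_segmentReversal_of_mem π (by simp only [mem_Icc]; omega) (by omega))
    (fun j hj => by simp only [mem_Icc] at hj ⊢; omega)
    (fun j hj => by simp only [mem_Icc] at hj ⊢; omega)
    (fun j hj => by simp only [mem_Icc, mem_Iic] at hj ⊢; omega)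
    (fun j hj => by simp only [mem_Icc, mem_Iic] at hj ⊢; omega)

/-- The POPs `(1,2;3,4;5)`, `(1,2;4,3;5)`, `(1,2;4,5;3)` are pairwise Wilf-equivalent. -/
theorem stmt16 :
    ∀ P ∈ [pop12c34i5, pop12c43i5, pop12c45i3],
      ∀ Q ∈ [pop12c34i5, pop12c43i5, pop12c45i3],
        WilfEquiv P Q := by
  have hAB : WilfEquiv pop12c34i5 pop12c43i5 := fun n _ =>
    avoiders_pop12c34i5_eq_avoiders_pop12c43i5 n
  have hBC : WilfEquiv pop12c43i5 pop12c45i3 := fun n _ =>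
    avoiders_pop12c43i5_eq_avoiders_pop12c45i3 n
  have hA : ∀ P ∈ [pop12c34i5, pop12c43i5, pop12c45i3], WilfEquiv pop12c34i5 P := by
    simp only [List.mem_cons, List.not_mem_nil, or_false, forall_eq_or_imp, forall_eq]
    exact ⟨fun _ _ => rfl, hAB, hAB.trans hBC⟩
  exact fun P hP Q hQ => (hA P hP).symm.trans (hA Q hQ)
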